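/- arXiv:1502.05585 — 7 statements merged into one kernel-verified Lean document; each statement's English description precedes it below -/
import Mathlib

section
/- Let A and B be semirings and let ρ = (ρ_k)_{k ∈ ℕ} be a family of base-point-preserving maps ρ_k : HA(k₊) → HB(k₊) which is natural, i.e. ρ_n ∘ HA(f) = HB(f) ∘ ρ_k for every pointed map f : k₊ → n₊. Identify HA(1₊) with A and HB(1₊) with B via φ ↦ φ(1). If the level-1 map ρ₁ : A → B satisfies ρ₁(1) = 1 and ρ₁(x·y) = ρ₁(x)·ρ₁(y) for all x, y ∈ A, then: (a) ρ₁ is a semiring homomorphism (in particular ρ₁(0) = 0 and ρ₁(x + y) = ρ₁(x) + ρ₁(y)); (b) ρ is given componentwise by ρ₁, i.e. ρ_k(φ)(x) = ρ₁(φ(x)) for all k, all φ ∈ HA(k₊) and all x. Consequently, the assignment sending a semiring homomorphism α : A → B to the family (φ ↦ α ∘ φ) is a bijection from semiring homomorphisms A → B onto the set of such natural, level-1-multiplicative, unital families ρ (i.e. the functor H from semirings to S-algebras is fully faithful). -/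
/-- The Γ-set `HR`: pointed functions `Fin (k+1) → R` with value `0` at the base point `0`. -/
abbrev HObj (R : Type*) [Semiring R] (k : ℕ) : Type _ := {φ : Fin (k + 1) → R // φ 0 = 0}

/-- Pushforward along a (pointed) map `f : k₊ → n₊`: fiberwise sums. -/
def HMap {R : Type*} [Semiring R] {k n : ℕ} (f : Fin (k + 1) → Fin (n + 1))
    (φ : HObj R k) : HObj R n :=
  ⟨fun y => if y = 0 then 0 else ∑ x ∈ Finset.univ.filter (fun x => f x = y), φ.1 x,
    if_pos rfl⟩

/-- The element of `HR(1₊)` with value `a` at `1` (identifying `HR(1₊)` with `R`). -/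
def single (R : Type*) [Semiring R] (a : R) : HObj R 1 :=
  ⟨fun x => if x = 1 then a else 0, if_neg (by decide)⟩

/-- A family of maps `HA(k₊) → HB(k₊)` is natural if it commutes with all pushforwards
along pointed maps. -/
def Natural {A B : Type*} [Semiring A] [Semiring B]
    (ρ : ∀ k, HObj A k → HObj B k) : Prop :=
  ∀ (k n : ℕ) (f : Fin (k + 1) → Fin (n + 1)), f 0 = 0 →
    ∀ φ : HObj A k, ρ n (HMap f φ) = HMap f (ρ k φ)

/-- The level-1 map `A → B` of a family `ρ`, via the identification `HA(1₊) ≃ A`,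
`φ ↦ φ(1)`. -/
def lev {A B : Type*} [Semiring A] [Semiring B]
    (ρ : ∀ k, HObj A k → HObj B k) : A → B :=
  fun a => (ρ 1 (single A a)).1 1

/-- The family associated to a semiring homomorphism `α : A → B`: componentwise
application of `α`. -/
def HComp {A B : Type*} [Semiring A] [Semiring B] (α : A →+* B) :
    ∀ k, HObj A k → HObj B k :=
  fun _ φ => ⟨fun x => α (φ.1 x), by simp [φ.2]⟩

section Aux
variable {A B : Type*} [Semiring A] [Semiring B]

lemma lev_zero_aux (ρ : ∀ k, HObj A k → HObj B k) (hnat : Natural ρ) :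
    lev ρ 0 = 0 := by
  have h := hnat 1 1 (fun _ => 0) rfl (single A 0)
  have h0 : HMap (fun _ => (0 : Fin 2)) (single A 0) = single A 0 := by
    apply Subtype.ext; funext y
    fin_cases y <;> simp [HMap, single]
  rw [h0] at h
  have := congrArg (fun ψ : HObj B 1 => ψ.1 1) h
  simpa [lev, HMap] using this

lemma key_aux (ρ : ∀ k, HObj A k → HObj B k) (hnat : Natural ρ)
    (k : ℕ) (φ : HObj A k) (x : Fin (k + 1)) (hx : x ≠ 0) :
    (ρ k φ).1 x = lev ρ (φ.1 x) := by
  set f : Fin (k + 1) → Fin 2 := fun z => if z = x then 1 else 0 with hf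
  have hf0 : f 0 = 0 := by
    simp only [hf]
    rw [if_neg]; exact fun h => hx h.symm
  have hfib : Finset.univ.filter (fun z => f z = 1) = {x} := by
    ext z
    simp only [Finset.mem_filter, Finset.mem_univ, true_and, Finset.mem_singleton, hf]
    split_ifs with h
    · simp [h]
    · simp [h]
  have h1 : HMap f φ = single A (φ.1 x) := by
    apply Subtype.ext; funext y
    fin_cases y
    · simp [HMap, single]
    · simp [HMap, single, hfib]
  have h := hnat k 1 f hf0 φ
  rw [h1] at h
  have := congrArg (fun ψ : HObj B 1 => ψ.1 1) h
  simpa [lev, HMap, hfib] using this.symm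

lemma lev_add_aux (ρ : ∀ k, HObj A k → HObj B k) (hnat : Natural ρ)
    (x y : A) : lev ρ (x + y) = lev ρ x + lev ρ y := by
  set φ : HObj A 2 := ⟨![0, x, y], rfl⟩ with hφ
  set f : Fin 3 → Fin 2 := fun z => if z = 0 then 0 else 1 with hf
  have hfib : Finset.univ.filter (fun z => f z = 1) = {1, 2} := by
    ext z
    simp only [Finset.mem_filter, Finset.mem_univ, true_and, Finset.mem_insert,
      Finset.mem_singleton, hf]
    fin_cases z <;> simp
  have h1 : HMap f φ = single A (x + y) := by
    apply Subtype.ext; funext z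
    fin_cases z
    · simp [HMap, single]
    · simp [HMap, single, hfib, hφ, Finset.sum_pair (by decide : (1 : Fin 3) ≠ 2)]
  have h := hnat 2 1 f (by simp [hf]) φ
  rw [h1] at h
  have h2 := congrArg (fun ψ : HObj B 1 => ψ.1 1) h
  have hx1 : (ρ 2 φ).1 1 = lev ρ x := by
    have := key_aux ρ hnat 2 φ 1 (by decide); simpa [hφ] using this
  have hy1 : (ρ 2 φ).1 2 = lev ρ y := by
    have := key_aux ρ hnat 2 φ 2 (by decide); simpa [hφ] using this
  simp only [lev] at h2 ⊢
  rw [h2]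
  simp [HMap, hfib, Finset.sum_pair (by decide : (1 : Fin 3) ≠ 2), hx1, hy1, lev]

end Aux

/-- full faithfulness of `H` from semirings to `S`-algebras.
If `ρ` is a natural family whose level-1 map is unital and multiplicative, then the
level-1 map is a semiring homomorphism, `ρ` is given componentwise by it; moreover
`α ↦ α ∘ -` is a bijection from semiring homomorphisms onto such families. -/
theorem stmt1 {A B : Type*} [Semiring A] [Semiring B]
    (ρ : ∀ k, HObj A k → HObj B k) (hnat : Natural ρ)
    (hone : lev ρ 1 = 1) (hmul : ∀ x y : A, lev ρ (x * y) = lev ρ x * lev ρ y) :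
    -- (a) the level-1 map is a semiring homomorphism
    (lev ρ 0 = 0 ∧ ∀ x y : A, lev ρ (x + y) = lev ρ x + lev ρ y) ∧
    -- (b) ρ is componentwise given by the level-1 map
    (∀ (k : ℕ) (φ : HObj A k) (x : Fin (k + 1)), (ρ k φ).1 x = lev ρ (φ.1 x)) ∧
    -- bijection: every semiring hom gives such a family, injectively, and every
    -- such family arises from a (necessarily unique) semiring hom
    (∀ α : A →+* B, Natural (HComp α) ∧ lev (HComp α) 1 = 1 ∧
        ∀ x y : A, lev (HComp α) (x * y) = lev (HComp α) x * lev (HComp α) y) ∧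
    Function.Injective (HComp (A := A) (B := B)) ∧
    (∃ α : A →+* B, HComp α = ρ) := by

  have hz := lev_zero_aux ρ hnat
  have hadd := lev_add_aux ρ hnat
  refine ⟨⟨hz, hadd⟩, ?_, ?_, ?_, ?_⟩
  · intro k φ x
    by_cases hx : x = 0
    · subst hx; rw [(ρ k φ).2, φ.2, hz]
    · exact key_aux ρ hnat k φ x hx
  · intro α
    refine ⟨?_, ?_, ?_⟩
    · intro k n f hf0 φ
      apply Subtype.ext; funext y
      simp only [HComp, HMap]
      split_ifs with h
      · simp
      · simp [map_sum]
    · simp [lev, HComp, single]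
    · intro x y; simp [lev, HComp, single]
  · intro α β h
    ext a
    have h2 := congrArg (fun ρ' => (ρ' 1 (single A a)).1 1) h
    simpa [HComp, single] using h2
  · refine ⟨⟨⟨⟨lev ρ, hone⟩, hmul⟩, hz, hadd⟩, ?_⟩
    funext k φ
    apply Subtype.ext; funext x
    show lev ρ (φ.1 x) = (ρ k φ).1 x
    by_cases hx : x = 0
    · subst hx; rw [(ρ k φ).2, φ.2, hz]
    · exact (key_aux ρ hnat k φ x hx).symm
end

section
/- Fix k ∈ ℕ. Let (f,g) : C = (F,G,v) → C' = (F',G',v') be a morphism of k-relations and assume C is reduced. Then f and g are bijections, and the pair of inverse maps (f⁻¹, g⁻¹) is again a morphism of k-relations C' → C; hence (f,g) is an isomorphism of k-relations. -/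
/-- A `k`-relation: nonempty finite types `F`, `G` and a map `v : F × G → Fin (k+1)`
with no identically zero row or column. -/
structure KRel (k : ℕ) where
  F : Type
  G : Type
  [finF : Fintype F]
  [finG : Fintype G]
  [neF : Nonempty F]
  [neG : Nonempty G]
  v : F × G → Fin (k + 1)
  hrow : ∀ x : F, ∃ y : G, v (x, y) ≠ 0
  hcol : ∀ y : G, ∃ x : F, v (x, y) ≠ 0

attribute [instance] KRel.finF KRel.finG KRel.neF KRel.neG

/-- A morphism of `k`-relations: a pair of surjections compatible with the values. -/
def IsHom {k : ℕ} (C C' : KRel k) (f : C.F → C'.F) (g : C.G → C'.G) : Prop :=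
  Function.Surjective f ∧ Function.Surjective g ∧
    ∀ (x : C.F) (y : C.G), C'.v (f x, g y) = C.v (x, y)

/-- A `k`-relation is reduced if no two rows and no two columns coincide. -/
def Reduced {k : ℕ} (C : KRel k) : Prop :=
  (∀ x x' : C.F, (∀ y, C.v (x, y) = C.v (x', y)) → x = x') ∧
  (∀ y y' : C.G, (∀ x, C.v (x, y) = C.v (x, y')) → y = y')

/-- The equivalence relation on rows: equality of the corresponding row of `v`. -/
def rowSetoid {k : ℕ} (C : KRel k) : Setoid C.F where
  r x x' := ∀ y, C.v (x, y) = C.v (x', y)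
  iseqv := ⟨fun _ _ => rfl, fun h y => (h y).symm, fun h h' y => (h y).trans (h' y)⟩

/-- The equivalence relation on columns: equality of the corresponding column of `v`. -/
def colSetoid {k : ℕ} (C : KRel k) : Setoid C.G where
  r y y' := ∀ x, C.v (x, y) = C.v (x, y')
  iseqv := ⟨fun _ _ => rfl, fun h x => (h x).symm, fun h h' x => (h x).trans (h' x)⟩

/-- The canonical reduction `r(C)` of a `k`-relation `C`. -/
noncomputable def reduce {k : ℕ} (C : KRel k) : KRel k where
  F := Quotient (rowSetoid C)
  G := Quotient (colSetoid C)
  finF := Fintype.ofFinite _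
  finG := Fintype.ofFinite _
  neF := ⟨Quotient.mk _ (Classical.arbitrary _)⟩
  neG := ⟨Quotient.mk _ (Classical.arbitrary _)⟩
  v := fun p =>
    Quotient.liftOn₂ p.1 p.2 (fun x y => C.v (x, y))
      (fun _ y x' _ hx hy => (hx y).trans (hy x'))
  hrow := fun qx =>
    Quotient.inductionOn qx fun x =>
      let ⟨y, hy⟩ := C.hrow x
      ⟨Quotient.mk (colSetoid C) y, hy⟩
  hcol := fun qy =>
    Quotient.inductionOn qy fun y =>
      let ⟨x, hx⟩ := C.hcol y
      ⟨Quotient.mk (rowSetoid C) x, hx⟩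

/-- a morphism of `k`-relations out of a reduced `k`-relation is an
isomorphism: both components are bijective, and the pair of inverse maps is again
a morphism of `k`-relations in the opposite direction. -/
theorem stmt7 (k : ℕ) (C C' : KRel k) (f : C.F → C'.F) (g : C.G → C'.G)
    (h : IsHom C C' f g) (hred : Reduced C) :
    Function.Bijective f ∧ Function.Bijective g ∧
    IsHom C' C (Function.invFun f) (Function.invFun g) := by
  obtain ⟨hfs, hgs, hv⟩ := h
  have hfi : Function.Injective f := by
    intro x x' hxx
    apply hred.1
    intro y
    rw [← hv x y, ← hv x' y, hxx]
  have hgi : Function.Injective g := by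
    intro y y' hyy
    apply hred.2
    intro x
    rw [← hv x y, ← hv x y', hyy]
  have hfb : Function.Bijective f := ⟨hfi, hfs⟩
  have hgb : Function.Bijective g := ⟨hgi, hgs⟩
  refine ⟨hfb, hgb, ?_, ?_, ?_⟩
  · intro x
    exact ⟨f x, Function.leftInverse_invFun hfi x⟩
  · intro y
    exact ⟨g y, Function.leftInverse_invFun hgi y⟩
  · intro x' y'
    rw [← hv]
    rw [Function.invFun_eq (hfs x'), Function.invFun_eq (hgs y')]
end

section
/- Let A be a commutative ring and G a subgroup of the group of units Aˣ. For φ, ψ ∈ HA(k₊) write φ ∼ ψ iff there exists g ∈ G with ψ(x) = g·φ(x) for all x. Then: (a) for every pointed map f : k₊ → n₊, φ ∼ ψ implies HA(f)(φ) ∼ HA(f)(ψ), so the pushforwards descend to the quotients HA(k₊)/∼; (b) if φ ∼ φ' in HA(k₊) and ψ ∼ ψ' in HA(l₊), then the products satisfy φ·ψ ∼ φ'·ψ', where (φ·ψ)(x,y) := φ(x)·ψ(y) and two such two-index arrays are equivalent iff one is a common G-multiple of the other on all pairs (x,y) with x ≠ 0 and y ≠ 0. (Hence the quotient HA/G is a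 Γ-set with an induced product, i.e. an S-algebra, and the quotient map HA → HA/G is a morphism of S-algebras.) -/
/-- for a commutative ring `A` and a subgroup `G ⊆ Aˣ`, the
equivalence `φ ∼ ψ ⟺ ∃ g ∈ G, ψ = g·φ` on `HA(k₊)` is compatible with
(a) the pushforwards along pointed maps and (b) the products, so the quotient
`HA/G` is an `S`-algebra and `HA → HA/G` a morphism of `S`-algebras. -/
theorem stmt11 {A : Type*} [CommRing A] (G : Subgroup Aˣ) :
    -- (a) pushforwards descend to the quotient
    (∀ (k n : ℕ) (f : Fin (k + 1) → Fin (n + 1)), f 0 = 0 →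
      ∀ φ ψ : HObj A k, (∃ g ∈ G, ∀ x, ψ.1 x = (↑g : A) * φ.1 x) →
        ∃ g ∈ G, ∀ y, (HMap f ψ).1 y = (↑g : A) * (HMap f φ).1 y) ∧
    -- (b) products are compatible with the equivalence
    (∀ (k l : ℕ) (φ φ' : HObj A k) (ψ ψ' : HObj A l),
      (∃ g ∈ G, ∀ x, φ'.1 x = (↑g : A) * φ.1 x) →
      (∃ g ∈ G, ∀ y, ψ'.1 y = (↑g : A) * ψ.1 y) →
      ∃ g ∈ G, ∀ (x : Fin (k + 1)) (y : Fin (l + 1)), x ≠ 0 → y ≠ 0 →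
        φ'.1 x * ψ'.1 y = (↑g : A) * (φ.1 x * ψ.1 y)) := by
  constructor
  · rintro k n f hf φ ψ ⟨g, hg, h⟩
    refine ⟨g, hg, fun y => ?_⟩
    simp only [HMap]
    split
    · simp
    · rw [Finset.mul_sum]
      exact Finset.sum_congr rfl fun x _ => h x
  · rintro k l φ φ' ψ ψ' ⟨g, hg, h⟩ ⟨g', hg', h'⟩
    refine ⟨g * g', mul_mem hg hg', fun x y _ _ => ?_⟩
    rw [h x, h' y]
    push_cast
    ring
end

section
/- Let A be a commutative ring, G a subgroup of Aˣ, and e : A → A/G the quotient map identifying a and b whenever b = g·a for some g ∈ G. Then for all a, b ∈ A one has the equality of subsets of A/G: {e(u + v) : u, v ∈ A, e(u) = e(a), e(v) = e(b)} = {e(a + g·b) : g ∈ G}. In particular, the multivalued hyper-addition x ⊕ y := {e(u+v) : e(u) = x, e(v) = y} on A/G, obtained from the Γ-set HA/G via the maps α, β, γ : 2₊ → 1₊, coincides with the coset hyper-addition of the quotient hyperring A/G: on representatives, (aG) ⊕ (bG) = {(a + g b)G : g ∈ G}. -/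
/-- The orbit equivalence relation on a commutative ring `A` under multiplication by a
subgroup `G` of the units: `a ≈ b` iff `b = g·a` for some `g ∈ G`. -/
def orbitSetoid (A : Type*) [CommRing A] (G : Subgroup Aˣ) : Setoid A where
  r a b := ∃ g ∈ G, b = (↑g : A) * a
  iseqv := by
    refine ⟨fun a => ⟨1, one_mem G, by simp⟩, ?_, ?_⟩
    · rintro a b ⟨g, hg, rfl⟩
      exact ⟨g⁻¹, inv_mem hg, by simp⟩
    · rintro a b c ⟨g, hg, rfl⟩ ⟨g', hg', rfl⟩
      exact ⟨g' * g, mul_mem hg' hg, by push_cast; ring⟩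

/-- for a commutative ring `A`, a subgroup `G ⊆ Aˣ` and the orbit map
`e : A → A/G`, the multivalued hyper-addition on `A/G` obtained from sums of
representatives coincides with the coset hyper-addition:
`{e(u+v) : e(u)=e(a), e(v)=e(b)} = {e(a + g·b) : g ∈ G}`. -/
theorem stmt12 {A : Type*} [CommRing A] (G : Subgroup Aˣ) (a b : A) :
    {c : Quotient (orbitSetoid A G) | ∃ u v : A,
        Quotient.mk (orbitSetoid A G) u = Quotient.mk (orbitSetoid A G) a ∧
        Quotient.mk (orbitSetoid A G) v = Quotient.mk (orbitSetoid A G) b ∧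
        c = Quotient.mk (orbitSetoid A G) (u + v)} =
      {c : Quotient (orbitSetoid A G) | ∃ g ∈ G,
        c = Quotient.mk (orbitSetoid A G) (a + (↑g : A) * b)} := by
  ext c
  simp only [Set.mem_setOf_eq]
  constructor
  · rintro ⟨u, v, hu, hv, rfl⟩
    obtain ⟨g, hg, hga⟩ := Quotient.exact hu
    obtain ⟨h, hh, hhb⟩ := Quotient.exact hv
    refine ⟨g * h⁻¹, mul_mem hg (inv_mem hh), Quotient.sound ⟨g, hg, ?_⟩⟩
    have : (↑(h⁻¹) : A) * b = v := by
      rw [hhb]; push_cast; rw [← mul_assoc]; simp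
    push_cast
    rw [mul_assoc, this, hga, mul_add]
  · rintro ⟨g, hg, rfl⟩
    refine ⟨a, (↑g : A) * b, rfl, Quotient.sound ⟨g⁻¹, inv_mem hg, ?_⟩, rfl⟩
    rw [← mul_assoc]; simp
end

section
/- Let R be a semiring and ‖·‖ : R → ℝ a sub-multiplicative seminorm: ‖x‖ ≥ 0 for all x, ‖0‖ = 0, ‖1‖ = 1, ‖x + y‖ ≤ ‖x‖ + ‖y‖ and ‖x·y‖ ≤ ‖x‖·‖y‖ for all x, y ∈ R. Then: (a) for every pointed map f : k₊ → n₊ and every φ ∈ HR(k₊), ∑_{y ≠ 0} ‖(HR(f)φ)(y)‖ ≤ ∑_{x ≠ 0} ‖φ(x)‖; in particular if ∑_{x ≠ 0} ‖φ(x)‖ ≤ 1 then ∑_{y ≠ 0} ‖(HR(f)φ)(y)‖ ≤ 1; (b) for all φ ∈ HR(k₊) and ψ ∈ HR(l₊), ∑_{x ≠ 0, y ≠ 0} ‖φ(x)·ψ(y)‖ ≤ (∑_{x ≠ 0} ‖φ(x)‖)·(∑_{y ≠ 0} ‖ψ(y)‖); in particular the unit-ball condition ∑ ‖·‖ ≤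 1 is stable under pushforward and product, so ‖HR‖₁ is an S-subalgebra of HR. -/
open Finset

section Subadditive

variable {α β M : Type*} [AddCommMonoid M] (N : M → ℝ)

theorem sum_le_sum_fiberwise_of_subadditive [DecidableEq β]
    (hNz : N 0 = 0) (hNadd : ∀ x y, N (x + y) ≤ N x + N y)
    (f : α → β) (g : α → M) (s : Finset α) (t : Finset β) :
    ∑ y ∈ t, N (∑ x ∈ s with f x = y, g x) ≤ ∑ x ∈ s with f x ∈ t, N (g x) :=
  calc ∑ y ∈ t, N (∑ x ∈ s with f x = y, g x)
      ≤ ∑ y ∈ t, ∑ x ∈ s with f x = y, N (g x) :=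
        sum_le_sum fun _ _ => le_sum_of_subadditive N hNz.le hNadd _ _
    _ = ∑ x ∈ s with f x ∈ t, N (g x) := sum_fiberwise_eq_sum_filter _ _ _ _

end Subadditive

section PointedL1

variable {R : Type*} [Semiring R] (N : R → ℝ)

def HObj.l1 {k : ℕ} (φ : HObj R k) : ℝ := ∑ x with x ≠ 0, N (φ.1 x)

theorem HObj.l1_nonneg (hN0 : ∀ x, 0 ≤ N x) {k : ℕ} (φ : HObj R k) : 0 ≤ φ.l1 N :=
  sum_nonneg fun _ _ => hN0 _

theorem HObj.l1_HMap_le (hN0 : ∀ x, 0 ≤ N x) (hNz : N 0 = 0)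
    (hNadd : ∀ x y, N (x + y) ≤ N x + N y) {k n : ℕ} (f : Fin (k + 1) → Fin (n + 1))
    (hf : f 0 = 0) (φ : HObj R k) : (HMap f φ).l1 N ≤ φ.l1 N :=
  calc (HMap f φ).l1 N
      = ∑ y with y ≠ 0, N (∑ x with f x = y, φ.1 x) :=
        sum_congr rfl fun y hy => by simp only [HMap, if_neg (mem_filter.1 hy).2]
    _ ≤ ∑ x with f x ∈ ({y | y ≠ 0} : Finset _), N (φ.1 x) :=
        sum_le_sum_fiberwise_of_subadditive N hNz hNadd f _ univ _
    _ ≤ φ.l1 N := by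
        refine sum_le_sum_of_subset_of_nonneg (fun x hx => ?_) fun _ _ _ => hN0 _
        simp only [mem_filter, mem_univ, true_and] at hx ⊢
        exact fun hx0 => hx (hx0 ▸ hf)

theorem HObj.sum_sum_mul_le_l1_mul_l1 (hNmul : ∀ x y, N (x * y) ≤ N x * N y) {k l : ℕ}
    (φ : HObj R k) (ψ : HObj R l) :
    ∑ x with x ≠ 0, ∑ y with y ≠ 0, N (φ.1 x * ψ.1 y) ≤ φ.l1 N * ψ.l1 N := by
  rw [l1, l1, sum_mul_sum]
  exact sum_le_sum fun _ _ => sum_le_sum fun _ _ => hNmul _ _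

end PointedL1

theorem stmt13_general {R : Type*} [Semiring R] (N : R → ℝ)
    (hN0 : ∀ x, 0 ≤ N x) (hNz : N 0 = 0)
    (hNadd : ∀ x y, N (x + y) ≤ N x + N y) (hNmul : ∀ x y, N (x * y) ≤ N x * N y) :
    -- (a) the ℓ¹-size does not increase under pushforward
    (∀ (k n : ℕ) (f : Fin (k + 1) → Fin (n + 1)), f 0 = 0 → ∀ φ : HObj R k,
        ∑ y ∈ Finset.univ.filter (fun y : Fin (n + 1) => y ≠ 0), N ((HMap f φ).1 y) ≤
          ∑ x ∈ Finset.univ.filter (fun x : Fin (k + 1) => x ≠ 0), N (φ.1 x)) ∧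
    -- (a) in particular, the unit ball is stable under pushforward
    (∀ (k n : ℕ) (f : Fin (k + 1) → Fin (n + 1)), f 0 = 0 → ∀ φ : HObj R k,
        (∑ x ∈ Finset.univ.filter (fun x : Fin (k + 1) => x ≠ 0), N (φ.1 x)) ≤ 1 →
        ∑ y ∈ Finset.univ.filter (fun y : Fin (n + 1) => y ≠ 0), N ((HMap f φ).1 y) ≤ 1) ∧
    -- (b) sub-multiplicativity for products
    (∀ (k l : ℕ) (φ : HObj R k) (ψ : HObj R l),
        ∑ x ∈ Finset.univ.filter (fun x : Fin (k + 1) => x ≠ 0),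
            ∑ y ∈ Finset.univ.filter (fun y : Fin (l + 1) => y ≠ 0), N (φ.1 x * ψ.1 y) ≤
          (∑ x ∈ Finset.univ.filter (fun x : Fin (k + 1) => x ≠ 0), N (φ.1 x)) *
            (∑ y ∈ Finset.univ.filter (fun y : Fin (l + 1) => y ≠ 0), N (ψ.1 y))) ∧
    -- (b) in particular, the unit ball is stable under products
    (∀ (k l : ℕ) (φ : HObj R k) (ψ : HObj R l),
        (∑ x ∈ Finset.univ.filter (fun x : Fin (k + 1) => x ≠ 0), N (φ.1 x)) ≤ 1 →
        (∑ y ∈ Finset.univ.filter (fun y : Fin (l + 1) => y ≠ 0), N (ψ.1 y)) ≤ 1 →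
        ∑ x ∈ Finset.univ.filter (fun x : Fin (k + 1) => x ≠ 0),
            ∑ y ∈ Finset.univ.filter (fun y : Fin (l + 1) => y ≠ 0), N (φ.1 x * ψ.1 y) ≤ 1) := by
  refine ⟨fun _ _ => HObj.l1_HMap_le N hN0 hNz hNadd,
    fun _ _ f hf φ hφ => (HObj.l1_HMap_le N hN0 hNz hNadd f hf φ).trans hφ,
    fun _ _ => HObj.sum_sum_mul_le_l1_mul_l1 N hNmul,
    fun _ _ φ ψ hφ hψ => ?_⟩
  exact (HObj.sum_sum_mul_le_l1_mul_l1 N hNmul φ ψ).trans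
    (mul_le_one₀ hφ (HObj.l1_nonneg N hN0 ψ) hψ)

/-- for a sub-multiplicative seminorm `N` on a semiring `R`, the
`ℓ¹`-size does not increase under pushforward, and is sub-multiplicative under the
product; in particular the unit ball condition `∑ N ≤ 1` is stable under both, so
`‖HR‖₁` is an `S`-subalgebra of `HR`. -/
theorem stmt13 {R : Type*} [Semiring R] (N : R → ℝ)
    (hN0 : ∀ x, 0 ≤ N x) (hNz : N 0 = 0) (hN1 : N 1 = 1)
    (hNadd : ∀ x y, N (x + y) ≤ N x + N y) (hNmul : ∀ x y, N (x * y) ≤ N x * N y) :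
    -- (a) the ℓ¹-size does not increase under pushforward
    (∀ (k n : ℕ) (f : Fin (k + 1) → Fin (n + 1)), f 0 = 0 → ∀ φ : HObj R k,
        ∑ y ∈ Finset.univ.filter (fun y : Fin (n + 1) => y ≠ 0), N ((HMap f φ).1 y) ≤
          ∑ x ∈ Finset.univ.filter (fun x : Fin (k + 1) => x ≠ 0), N (φ.1 x)) ∧
    -- (a) in particular, the unit ball is stable under pushforward
    (∀ (k n : ℕ) (f : Fin (k + 1) → Fin (n + 1)), f 0 = 0 → ∀ φ : HObj R k,
        (∑ x ∈ Finset.univ.filter (fun x : Fin (k + 1) => x ≠ 0), N (φ.1 x)) ≤ 1 →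
        ∑ y ∈ Finset.univ.filter (fun y : Fin (n + 1) => y ≠ 0), N ((HMap f φ).1 y) ≤ 1) ∧
    -- (b) sub-multiplicativity for products
    (∀ (k l : ℕ) (φ : HObj R k) (ψ : HObj R l),
        ∑ x ∈ Finset.univ.filter (fun x : Fin (k + 1) => x ≠ 0),
            ∑ y ∈ Finset.univ.filter (fun y : Fin (l + 1) => y ≠ 0), N (φ.1 x * ψ.1 y) ≤
          (∑ x ∈ Finset.univ.filter (fun x : Fin (k + 1) => x ≠ 0), N (φ.1 x)) *
            (∑ y ∈ Finset.univ.filter (fun y : Fin (l + 1) => y ≠ 0), N (ψ.1 y))) ∧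
    -- (b) in particular, the unit ball is stable under products
    (∀ (k l : ℕ) (φ : HObj R k) (ψ : HObj R l),
        (∑ x ∈ Finset.univ.filter (fun x : Fin (k + 1) => x ≠ 0), N (φ.1 x)) ≤ 1 →
        (∑ y ∈ Finset.univ.filter (fun y : Fin (l + 1) => y ≠ 0), N (ψ.1 y)) ≤ 1 →
        ∑ x ∈ Finset.univ.filter (fun x : Fin (k + 1) => x ≠ 0),
            ∑ y ∈ Finset.univ.filter (fun y : Fin (l + 1) => y ≠ 0), N (φ.1 x * ψ.1 y) ≤ 1) :=
  stmt13_general N hN0 hNz hNadd hNmul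
end

section
/- Let R be a semiring and k ∈ ℕ. For every finitely supported function T : HR(k₊) → R (i.e. T(w) = 0 for all but finitely many w ∈ HR(k₊)) there exist finite types X and Y, a map v : X × Y → Fin (k+1), and functions ξ : X → R, η : Y → R, such that for every w ∈ HR(k₊) with w not the zero function: T(w) = ∑_{x ∈ X : φ_x = w} ξ(x), where for each x ∈ X the function φ_x ∈ HR(k₊) is defined by φ_x(j) := ∑_{y ∈ Y : v(x,y) = j} η(y) for j ≠ 0 and φ_x(0) := 0. (This is the surjectivity of the assembly map HR ∧ HR → H̃R ∘ HR evaluated at k₊: every formal R-linear combination of elements of Rᵏ, modulo the base point, arises from such data.) -/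
/-- The element `φ_x ∈ HR(k₊)` determined by the data `(v, η)` at `x`:
`φ_x(j) = ∑_{y : v(x,y) = j} η(y)` for `j ≠ 0`. -/
def assembled {R : Type*} [Semiring R] {k p q : ℕ}
    (v : Fin p × Fin q → Fin (k + 1)) (η : Fin q → R) (x : Fin p) : HObj R k :=
  ⟨fun j => if j = 0 then 0 else ∑ y ∈ Finset.univ.filter (fun y => v (x, y) = j), η y,
    if_pos rfl⟩

-- Statement 16: surjectivity of the assembly map `HR ∧ HR → H̃R ∘ HR` at `k₊`.
-- Every finitely supported `R`-valued function `T` on `HR(k₊)` (modulo its value at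
-- the base point) arises from data `(X, Y, v, ξ, η)`: for every nonzero `w`,
-- `T(w) = ∑_{x : φ_x = w} ξ(x)`, with `φ_x` as above.
open Classical in
theorem stmt16 {R : Type*} [Semiring R] (k : ℕ) (T : HObj R k → R)
    (hT : (Function.support T).Finite) :
    ∃ (p q : ℕ) (v : Fin p × Fin q → Fin (k + 1)) (ξ : Fin p → R) (η : Fin q → R),
      ∀ w : HObj R k, w.1 ≠ (fun _ => 0) →
        T w = ∑ x ∈ Finset.univ.filter (fun x => assembled v η x = w), ξ x := by
  classical
  set S := hT.toFinset with hS
  set n := S.card with hn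
  let f : Fin n → HObj R k := fun i => (S.equivFin.symm i : HObj R k)
  have hfinj : Function.Injective f := fun a b h =>
    S.equivFin.symm.injective (Subtype.ext h)
  have hcover : ∀ w, T w ≠ 0 → ∃ i, f i = w := by
    intro w hw
    have hw' : w ∈ S := hT.mem_toFinset.mpr hw
    exact ⟨S.equivFin ⟨w, hw'⟩, by simp [f]⟩
  let e : Fin (n * (k + 1)) ≃ Fin n × Fin (k + 1) := finProdFinEquiv.symm
  refine ⟨n, n * (k + 1),
    fun z => if (e z.2).1 = z.1 then (e z.2).2 else 0,
    fun x => T (f x),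
    fun y => (f (e y).1).1 ((e y).2), ?_⟩
  intro w hw
  have hasm : ∀ x : Fin n,
      assembled (fun z => if (e z.2).1 = z.1 then (e z.2).2 else 0)
        (fun y => (f (e y).1).1 ((e y).2)) x = f x := by
    intro x
    apply Subtype.ext
    funext j
    by_cases hj : j = 0
    · simp [assembled, hj, (f x).2]
    · simp only [assembled, if_neg hj]
      rw [Finset.sum_filter]
      rw [← Equiv.sum_comp e.symm
        (fun z : Fin (n * (k + 1)) =>
          if (if (e z).1 = x then (e z).2 else 0) = j then (f (e z).1).1 ((e z).2) else 0)]
      simp only [Equiv.apply_symm_apply]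
      rw [Fintype.sum_prod_type]
      rw [Finset.sum_eq_single x]
      · simp only [if_pos rfl]
        simp [Finset.sum_ite_eq' Finset.univ j (fun j' => (f x).1 j')]
      · intro b _ hb
        simp [hb, Ne.symm hj]
      · simp
  have hfilt : (Finset.univ.filter fun x =>
      assembled (fun z => if (e z.2).1 = z.1 then (e z.2).2 else 0)
        (fun y => (f (e y).1).1 ((e y).2)) x = w)
      = Finset.univ.filter (fun x => f x = w) := by
    apply Finset.filter_congr
    intro x _
    rw [hasm x]
  rw [hfilt]
  by_cases hTw : T w = 0
  · rw [hTw]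
    apply (Finset.sum_eq_zero _).symm
    intro x hx
    have : f x = w := (Finset.mem_filter.mp hx).2
    rw [this, hTw]
  · obtain ⟨i, hi⟩ := hcover w hTw
    have : Finset.univ.filter (fun x => f x = w) = {i} := by
      ext x
      simp only [Finset.mem_filter, Finset.mem_univ, true_and, Finset.mem_singleton]
      constructor
      · intro h; exact hfinj (h.trans hi.symm)
      · rintro rfl; exact hi
    rw [this, Finset.sum_singleton, hi]
end

section
/- Let λ and μ be positive real numbers and consider the multiplication map m(q, q') := q·q' from {q ∈ ℚ : |q| ≤ λ} × {q' ∈ ℚ : |q'| ≤ μ} to {r ∈ ℚ : |r| ≤ λ·μ}. (a) If λ is rational, then m is surjective. (b) If λ and μ are both irrational while λ·μ is rational, then m is not surjective: no pair (q, q') in the domain has |q·q'| = λ·μ, although λ·μ itself is a rational number of absolute value λ·μ. (This dichotomy is the mechanism behind the multiplication rule 𝒪(D) ∧_{𝒪} 𝒪(D') ≅ 𝒪(D + D') for sheaves attached to Arakelov divisors, which holds except when e^a and e^{a'} are irrational with rational product.) -/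
/-- the multiplication map from
`{q ∈ ℚ : |q| ≤ lam} × {q' ∈ ℚ : |q'| ≤ mu}` to `{r ∈ ℚ : |r| ≤ lam · mu}`:
(a) is surjective when `lam` is rational;
(b) is not surjective when `lam` and `mu` are irrational with `lam · mu` rational:
no pair in the domain even reaches absolute value `lam · mu`, although `lam · mu`
itself is a rational of absolute value `lam · mu`. -/
theorem stmt18 (lam mu : ℝ) (hlam : 0 < lam) (hmu : 0 < mu) :
    -- (a)
    ((∃ ql : ℚ, (ql : ℝ) = lam) →
      ∀ r : ℚ, |(r : ℝ)| ≤ lam * mu →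
        ∃ q q' : ℚ, |(q : ℝ)| ≤ lam ∧ |(q' : ℝ)| ≤ mu ∧ q * q' = r) ∧
    -- (b)
    (Irrational lam → Irrational mu → (∃ r : ℚ, (r : ℝ) = lam * mu) →
      (∀ q q' : ℚ, |(q : ℝ)| ≤ lam → |(q' : ℝ)| ≤ mu →
          |(q : ℝ) * (q' : ℝ)| ≠ lam * mu) ∧
      ∃ r : ℚ, (r : ℝ) = lam * mu ∧ |(r : ℝ)| ≤ lam * mu ∧
        ∀ q q' : ℚ, |(q : ℝ)| ≤ lam → |(q' : ℝ)| ≤ mu → q * q' ≠ r) := by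
  constructor
  · rintro ⟨ql, rfl⟩ r hr
    have hql : (0:ℝ) < ql := hlam
    have hql0 : ql ≠ 0 := by exact_mod_cast hql.ne'
    refine ⟨ql, r / ql, ?_, ?_, ?_⟩
    · rw [abs_of_pos hql]
    · push_cast
      rw [abs_div, abs_of_pos hql, div_le_iff₀ hql]
      linarith [hr]
    · field_simp
  · intro hil him ⟨r, hr⟩
    have key : ∀ q q' : ℚ, |(q : ℝ)| ≤ lam → |(q' : ℝ)| ≤ mu →
        |(q : ℝ) * (q' : ℝ)| ≠ lam * mu := by
      intro q q' hq hq' heq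
      have h1 : |(q : ℝ)| < lam := lt_of_le_of_ne hq (by
        intro h
        exact hil ⟨|q|, by push_cast; exact h⟩)
      have h2 : |(q' : ℝ)| < mu := lt_of_le_of_ne hq' (by
        intro h
        exact him ⟨|q'|, by push_cast; exact h⟩)
      rw [abs_mul] at heq
      nlinarith [abs_nonneg (q:ℝ), abs_nonneg (q':ℝ)]
    refine ⟨key, r, hr, by rw [hr, abs_of_pos (mul_pos hlam hmu)], ?_⟩
    intro q q' hq hq' heq
    apply key q q' hq hq'
    have : (q:ℝ) * (q':ℝ) = (r:ℝ) := by exact_mod_cast congrArg (Rat.cast (K := ℝ)) heq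
    rw [this, hr, abs_of_pos (mul_pos hlam hmu)]
end
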